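/- arXiv:2202.04690 — 3 statements merged into one kernel-verified Lean document; each statement's English description precedes it below -/
import Mathlib

section
/- Let F be a class of functions from X to [−1,1]. If the sequential fat-shattering dimension of F at scale δ equals d, then 2^d ≤ N(F, δ/3), where N(F, δ/3) is the minimal size of a δ/3-covering of F in the supremum norm. In particular, fat_δ(F) ≤ log₂ N(F, δ/3). -/
/-!
Two sign paths `ε ≠ ε'` agree up to their first disagreement `t`, so they reach the same node
of the shattered tree at depth `t` and branch in opposite directions there: one witness lies
`δ/2` above the threshold at that node, the other `δ/2` below, so the witnesses are
`δ`-separated in the sup norm. A single centre of a `δ/3`-cover cannot serve two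
`δ`-separated functions, so the `2^d` witnesses need `2^d` distinct centres.
-/

open Finset

lemma exists_first_ne {ι α : Type*} [LinearOrder ι] [WellFoundedLT ι] {ε ε' : ι → α}
    (h : ε ≠ ε') : ∃ t, ε t ≠ ε' t ∧ ∀ i < t, ε i = ε' i := by
  obtain ⟨t, ht, hmin⟩ := wellFounded_lt.has_min {t | ε t ≠ ε' t} (Function.ne_iff.mp h)
  exact ⟨t, ht, fun i hi => not_not.mp fun hne => hmin i hne hi⟩

lemma le_abs_sub_of_opposite_sides {a b c δ : ℝ} {β β' : Bool} (hne : β ≠ β')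
    (ha : (if β then (1 : ℝ) else -1) * (a - c) ≥ δ / 2)
    (hb : (if β' then (1 : ℝ) else -1) * (b - c) ≥ δ / 2) : δ ≤ |a - b| := by
  cases β <;> cases β' <;> simp only [ne_eq, not_true_eq_false] at hne <;>
    simp only [Bool.false_eq_true, if_true, if_false, one_mul, neg_one_mul] at ha hb
  · rw [abs_sub_comm]; exact le_abs.mpr (Or.inl (by linarith))
  · exact le_abs.mpr (Or.inl (by linarith))

lemma shattering_witnesses_separated {X : Type*} {d : ℕ} {δ : ℝ}
    (xtree : ∀ t : Fin d, (Fin t → Bool) → X) (stree : ∀ t : Fin d, (Fin t → Bool) → ℝ)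
    {f : (Fin d → Bool) → X → ℝ}
    (hf : ∀ ε t, (if ε t then (1 : ℝ) else -1) *
        (f ε (xtree t fun i => ε ⟨i, i.isLt.trans t.isLt⟩) -
          stree t fun i => ε ⟨i, i.isLt.trans t.isLt⟩) ≥ δ / 2)
    {ε ε' : Fin d → Bool} (h : ε ≠ ε') : ∃ x, δ ≤ |f ε x - f ε' x| := by
  obtain ⟨t, hne, hagree⟩ := exists_first_ne h
  have hprefix : (fun i : Fin t => ε ⟨i, i.isLt.trans t.isLt⟩)
      = fun i : Fin t => ε' ⟨i, i.isLt.trans t.isLt⟩ :=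
    funext fun i => hagree _ i.isLt
  have hε' := hf ε' t
  rw [← hprefix] at hε'
  exact ⟨_, le_abs_sub_of_opposite_sides hne (hf ε t) hε'⟩

lemma card_le_card_of_separated_of_cover {ι X : Type*} [Fintype ι] {g : ι → X → ℝ}
    {S : Finset (X → ℝ)} {r δ : ℝ} (hr : 2 * r < δ)
    (hsep : ∀ i j, i ≠ j → ∃ x, δ ≤ |g i x - g j x|)
    (hcover : ∀ i, ∃ s ∈ S, ∀ x, |s x - g i x| ≤ r) : Fintype.card ι ≤ S.card := by
  choose s hsS hs using hcover
  have hinj : Function.Injective s := by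
    intro i j hij
    by_contra hne
    obtain ⟨x, hx⟩ := hsep i j hne
    have hclose : |g i x - g j x| ≤ r + r := by
      calc |g i x - g j x| = |(s i x - g j x) - (s i x - g i x)| := by ring_nf
        _ ≤ |s i x - g j x| + |s i x - g i x| := abs_sub _ _
        _ ≤ r + r := add_le_add (hij ▸ hs j x) (hs i x)
    linarith
  rw [← card_univ]
  exact card_le_card_of_injOn s (fun i _ => hsS i) hinj.injOn

theorem stmt_5_general {X : Type*} (F : Set (X → ℝ))
    (δ : ℝ) (hδ : 0 < δ) (d : ℕ)
    (xtree : ∀ t : Fin d, (Fin t → Bool) → X)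
    (stree : ∀ t : Fin d, (Fin t → Bool) → ℝ)
    (hshat : ∀ ε : Fin d → Bool, ∃ f ∈ F, ∀ t : Fin d,
      (if ε t then (1 : ℝ) else -1) *
          (f (xtree t fun i => ε ⟨i, i.isLt.trans t.isLt⟩) -
            stree t fun i => ε ⟨i, i.isLt.trans t.isLt⟩) ≥ δ / 2)
    (S : Finset (X → ℝ))
    (hcover : ∀ f ∈ F, ∃ s ∈ S, ∀ x, |s x - f x| ≤ δ / 3) :
    2 ^ d ≤ S.card := by
  choose f hfF hf using hshat
  have hcard := card_le_card_of_separated_of_cover (by linarith : 2 * (δ / 3) < δ)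
    (fun _ _ => shattering_witnesses_separated xtree stree hf) (fun ε => hcover _ (hfF ε))
  simpa using hcard

/-- If a class `F` of `[−1,1]`-valued functions sequentially fat-shatters a binary tree of
depth `d` at scale `δ`, then every `δ/3`-covering of `F` in the sup norm has size at least `2^d`.
In particular `fat_δ(F) ≤ log₂ N(F, δ/3)`. -/
theorem stmt_5 {X : Type*} (F : Set (X → ℝ))
    (hF : ∀ f ∈ F, ∀ x, f x ∈ Set.Icc (-1 : ℝ) 1)
    (δ : ℝ) (hδ : 0 < δ) (d : ℕ)
    (xtree : ∀ t : Fin d, (Fin t → Bool) → X)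
    (stree : ∀ t : Fin d, (Fin t → Bool) → ℝ)
    (hshat : ∀ ε : Fin d → Bool, ∃ f ∈ F, ∀ t : Fin d,
      (if ε t then (1 : ℝ) else -1) *
          (f (xtree t fun i => ε ⟨i, i.isLt.trans t.isLt⟩) -
            stree t fun i => ε ⟨i, i.isLt.trans t.isLt⟩) ≥ δ / 2)
    (S : Finset (X → ℝ))
    (hcover : ∀ f ∈ F, ∃ s ∈ S, ∀ x, |s x - f x| ≤ δ / 3) :
    2 ^ d ≤ S.card :=
  stmt_5_general F δ hδ d xtree stree hshat S hcover
end

section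
/- Let F be a class of functions X → [−1,1] that is shattered at scale α by points x₁,…,x_m with witness s₁,…,s_m (i.e., for every ε ∈ {±1}^m there is f_ε ∈ F with εⱼ(f_ε(x_j) − s_j) ≥ α/2 for all j). Let ε_{j,k} for j ∈ [m], k ∈ [n] be i.i.d. Rademacher. Then E[sup_{f∈F} ∑_{j=1}^m ∑_{k=1}^n ε_{j,k} f(x_j)] ≥ (α/4)·m·E[|∑_{k=1}^n ε_k|] ≥ (α/8)·m·√n. -/
/-!
Fix an outcome and let `S_j = ∑_k ε_{j,k}` be the row sums. Shattering with the sign pattern of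
`(S_j)_j` gives `f ∈ F` with `∑_j S_j f(x_j) ≥ ∑_j S_j s_j + (α/2) ∑_j |S_j|`; in expectation the
first sum vanishes, so `E sup ≥ (α/2) ∑_j E|S_j|`. Khintchine's bounds `√n/2 ≤ E|S_j| ≤ √n` follow
from the moments `E S² = n` and `E S⁴ = 3n² - 2n`, which are computed by adding one independent sign
at a time: the odd terms vanish by independence.
-/

open MeasureTheory ProbabilityTheory Finset

section Moments
variable {Ω : Type*} [MeasurableSpace Ω] {P : Measure Ω} [IsProbabilityMeasure P] {Y : Ω → ℝ}

lemma integral_abs_le_sqrt_integral_sq (hY : MemLp Y 2 P) :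
    ∫ ω, |Y ω| ∂P ≤ √(∫ ω, Y ω ^ 2 ∂P) := by
  have hvar := variance_eq_sub hY.norm
  have hnonneg := variance_nonneg (fun ω => ‖Y ω‖) P
  apply Real.le_sqrt_of_sq_le
  simp only [Pi.pow_apply, Real.norm_eq_abs, sq_abs] at hvar hnonneg
  linarith

lemma half_le_integral_abs_of_integral_pow_four_le (hY : MemLp Y 4 P) {σ : ℝ} (hσ : 0 ≤ σ)
    (h2 : ∫ ω, Y ω ^ 2 ∂P = σ ^ 2) (h4 : ∫ ω, Y ω ^ 4 ∂P ≤ 3 * σ ^ 4) :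
    σ / 2 ≤ ∫ ω, |Y ω| ∂P := by
  have hint1 : Integrable (fun ω => |Y ω|) P :=
    (hY.integrable (by norm_num)).abs
  have hint2 : Integrable (fun ω => Y ω ^ 2) P :=
    (hY.mono_exponent (by norm_num)).integrable_sq
  have hint4 : Integrable (fun ω => Y ω ^ 4) P := by
    simpa [Real.norm_eq_abs, (by decide : Even 4).pow_abs] using
      hY.integrable_norm_pow (p := 4) (by norm_num)
  -- `12 σ² y² - y⁴ ≤ 16 σ³ |y|` since the difference is `|y| (|y| - 2σ)² (|y| + 4σ)`
  have hpoint : ∀ ω, 12 * σ ^ 2 * Y ω ^ 2 - Y ω ^ 4 ≤ 16 * σ ^ 3 * |Y ω| := fun ω => by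
    have h := mul_nonneg (mul_nonneg (abs_nonneg (Y ω)) (sq_nonneg (|Y ω| - 2 * σ)))
      (add_nonneg (abs_nonneg (Y ω)) (mul_nonneg (by norm_num : (0:ℝ) ≤ 4) hσ))
    have h2y : Y ω ^ 2 = |Y ω| ^ 2 := (sq_abs _).symm
    have h4y : Y ω ^ 4 = |Y ω| ^ 4 := ((by decide : Even 4).pow_abs _).symm
    rw [h2y, h4y]; nlinarith
  have hint := integral_mono ((hint2.const_mul (12 * σ ^ 2)).sub hint4)
    (hint1.const_mul (16 * σ ^ 3)) hpoint
  simp only [Pi.sub_apply] at hint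
  rw [integral_sub (hint2.const_mul _) hint4, integral_const_mul, integral_const_mul, h2] at hint
  rcases hσ.eq_or_lt with rfl | hσ
  · simpa using integral_nonneg fun ω => abs_nonneg (Y ω)
  · nlinarith [pow_pos hσ 3]

end Moments

structure IsRademacher {ι Ω : Type*} [MeasurableSpace Ω] (ε : ι → Ω → ℝ) (P : Measure Ω) :
    Prop where
  measurable : ∀ i, Measurable (ε i)
  indep : iIndepFun ε P
  eq_one_or_eq_neg_one : ∀ i ω, ε i ω = 1 ∨ ε i ω = -1
  measure_eq_one : ∀ i, P {ω | ε i ω = 1} = 1 / 2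

namespace IsRademacher

variable {ι κ Ω : Type*} [MeasurableSpace Ω] {P : Measure Ω} {ε : ι → Ω → ℝ}

lemma comp_injective {g : κ → ι} (hε : IsRademacher ε P) (hg : g.Injective) :
    IsRademacher (fun k => ε (g k)) P :=
  ⟨fun k => hε.measurable (g k), hε.indep.precomp hg, fun k => hε.eq_one_or_eq_neg_one (g k),
    fun k => hε.measure_eq_one (g k)⟩

lemma abs_eq_one (hε : IsRademacher ε P) (i : ι) (ω : Ω) : |ε i ω| = 1 := by
  rcases hε.eq_one_or_eq_neg_one i ω with h | h <;> simp [h]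

lemma sq_eq_one (hε : IsRademacher ε P) (i : ι) (ω : Ω) : ε i ω ^ 2 = 1 := by
  rw [← sq_abs, hε.abs_eq_one]; norm_num

lemma abs_sum_mul_le_card (hε : IsRademacher ε P) (T : Finset ι) {c : ι → ℝ}
    (hc : ∀ i, |c i| ≤ 1) (ω : Ω) : |∑ i ∈ T, ε i ω * c i| ≤ #T := by
  calc |∑ i ∈ T, ε i ω * c i| ≤ ∑ i ∈ T, |ε i ω * c i| := abs_sum_le_sum_abs _ _
    _ ≤ ∑ _i ∈ T, (1 : ℝ) := sum_le_sum fun i _ => by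
      rw [abs_mul, hε.abs_eq_one, one_mul]; exact hc i
    _ = #T := by simp

lemma abs_sum_le_card (hε : IsRademacher ε P) (T : Finset ι) (ω : Ω) :
    |∑ i ∈ T, ε i ω| ≤ #T := by
  simpa using hε.abs_sum_mul_le_card T (c := 1) (by simp) ω

lemma measurable_comp [Finite ι] (hε : IsRademacher ε P) (Φ : (ι → ℝ) → ℝ) :
    Measurable fun ω => Φ fun i => ε i ω := by
  have hsign : Measurable fun ω i => decide (ε i ω = 1) :=
    measurable_pi_lambda _ fun i => measurable_to_bool <| by
      convert hε.measurable i (measurableSet_singleton 1)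
      ext ω; simp
  have hfactor : (fun ω => Φ fun i => ε i ω) =
      (fun b : ι → Bool => Φ fun i => if b i then 1 else -1) ∘ fun ω i => decide (ε i ω = 1) :=
    funext fun ω => congrArg Φ <| funext fun i => by
      rcases hε.eq_one_or_eq_neg_one i ω with h | h <;> simp [h]
  rw [hfactor]
  exact (measurable_of_countable _).comp hsign

lemma bddAbove_range_sum_mul [Fintype ι] {A : Type*} (hε : IsRademacher ε P) {c : A → ι → ℝ}
    (hc : ∀ a i, |c a i| ≤ 1) (ω : Ω) : BddAbove (Set.range fun a => ∑ i, ε i ω * c a i) :=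
  ⟨Fintype.card ι, Set.forall_mem_range.2 fun a =>
    (le_abs_self _).trans (by simpa using hε.abs_sum_mul_le_card univ (hc a) ω)⟩

variable [IsProbabilityMeasure P]

lemma integrable (hε : IsRademacher ε P) (i : ι) : Integrable (ε i) P :=
  .of_bound (hε.measurable i).aestronglyMeasurable 1 (.of_forall fun ω => (hε.abs_eq_one i ω).le)

lemma integral_eq_zero (hε : IsRademacher ε P) (i : ι) : ∫ ω, ε i ω ∂P = 0 := by
  set A := {ω | ε i ω = 1}
  have hA : MeasurableSet A := hε.measurable i (measurableSet_singleton 1)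
  have hrepr : ∀ ω, ε i ω = A.indicator (fun _ => 2) ω - 1 := fun ω => by
    rcases hε.eq_one_or_eq_neg_one i ω with h | h
    · rw [Set.indicator_of_mem (by simp [A, h]), h]; norm_num
    · rw [Set.indicator_of_notMem (by simp [A, h]; norm_num), h]; norm_num
  rw [integral_congr_ae (.of_forall hrepr),
    integral_sub ((integrable_const 2).indicator hA) (integrable_const 1),
    integral_indicator_const _ hA, measureReal_def, hε.measure_eq_one]
  simp

lemma memLp_sum (hε : IsRademacher ε P) (T : Finset ι) (p : ENNReal) :
    MemLp (fun ω => ∑ i ∈ T, ε i ω) p P :=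
  .of_bound (Finset.measurable_sum T fun i _ => hε.measurable i).aestronglyMeasurable _
    (.of_forall (hε.abs_sum_le_card T))

lemma integrable_comp_sum (hε : IsRademacher ε P) {g : ℝ → ℝ} (hg : Continuous g)
    (T : Finset ι) : Integrable (fun ω => g (∑ i ∈ T, ε i ω)) P := by
  obtain ⟨C, hC⟩ := (isCompact_Icc (a := -(#T : ℝ)) (b := #T)).exists_bound_of_continuousOn
    hg.continuousOn
  have hmeas := hg.measurable.comp (Finset.measurable_sum T fun i _ => hε.measurable i)
  exact .of_bound hmeas.aestronglyMeasurable C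
    (.of_forall fun ω => hC _ (abs_le.mp (hε.abs_sum_le_card T ω)))

lemma integrable_comp_sum_mul (hε : IsRademacher ε P) {g : ℝ → ℝ} (hg : Continuous g)
    (T : Finset ι) (i : ι) : Integrable (fun ω => g (∑ j ∈ T, ε j ω) * ε i ω) P :=
  (hε.integrable_comp_sum hg T).mul_bdd (hε.measurable i).aestronglyMeasurable
    (.of_forall fun ω => (hε.abs_eq_one i ω).le)

lemma integral_comp_sum_mul_eq_zero (hε : IsRademacher ε P) {g : ℝ → ℝ} (hg : Measurable g)
    {T : Finset ι} {i : ι} (hi : i ∉ T) : ∫ ω, g (∑ j ∈ T, ε j ω) * ε i ω ∂P = 0 := by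
  have hind : IndepFun (fun ω => g (∑ j ∈ T, ε j ω)) (ε i) P := by
    simpa [Function.comp_def, Finset.sum_apply] using
      (hε.indep.indepFun_finsetSum_of_notMem hε.measurable hi).comp hg measurable_id
  have := hind.integral_mul_eq_mul_integral
    (hg.comp (Finset.measurable_sum T fun i _ => hε.measurable i)).aestronglyMeasurable
    (hε.measurable i).aestronglyMeasurable
  simpa [hε.integral_eq_zero] using this

lemma integral_sum_sq (hε : IsRademacher ε P) (T : Finset ι) :
    ∫ ω, (∑ i ∈ T, ε i ω) ^ 2 ∂P = #T := by
  classical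
  induction T using Finset.induction_on with
  | empty => simp
  | insert i T hi ih =>
    have hexpand : ∀ ω, (∑ j ∈ insert i T, ε j ω) ^ 2
        = ((∑ j ∈ T, ε j ω) ^ 2 + 1) + 2 * (∑ j ∈ T, ε j ω) * ε i ω := fun ω => by
      rw [sum_insert hi]; linear_combination hε.sq_eq_one i ω
    have hsq := hε.integrable_comp_sum (continuous_pow 2) T
    have hodd := hε.integral_comp_sum_mul_eq_zero (g := fun y => 2 * y) (by fun_prop) hi
    have hodd_int := hε.integrable_comp_sum_mul (g := fun y => 2 * y) (by fun_prop) T i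
    simp_rw [hexpand]
    rw [integral_add (hsq.fun_add (integrable_const 1)) hodd_int,
      integral_add hsq (integrable_const 1), ih, hodd, card_insert_of_notMem hi]
    simp

lemma integral_sum_pow_four (hε : IsRademacher ε P) (T : Finset ι) :
    ∫ ω, (∑ i ∈ T, ε i ω) ^ 4 ∂P = 3 * #T ^ 2 - 2 * #T := by
  classical
  induction T using Finset.induction_on with
  | empty => simp
  | insert i T hi ih =>
    have hexpand : ∀ ω, (∑ j ∈ insert i T, ε j ω) ^ 4
        = ((∑ j ∈ T, ε j ω) ^ 4 + 6 * (∑ j ∈ T, ε j ω) ^ 2 + 1)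
          + (4 * (∑ j ∈ T, ε j ω) ^ 3 + 4 * ∑ j ∈ T, ε j ω) * ε i ω := fun ω => by
      rw [sum_insert hi]
      linear_combination (ε i ω ^ 2 + 1 + 4 * (∑ j ∈ T, ε j ω) * ε i ω
        + 6 * (∑ j ∈ T, ε j ω) ^ 2) * hε.sq_eq_one i ω
    have hpow (k : ℕ) := hε.integrable_comp_sum (continuous_pow k) T
    have hodd := hε.integral_comp_sum_mul_eq_zero (g := fun y => 4 * y ^ 3 + 4 * y)
      (by fun_prop) hi
    have hodd_int := hε.integrable_comp_sum_mul (g := fun y => 4 * y ^ 3 + 4 * y)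
      (by fun_prop) T i
    simp_rw [hexpand]
    rw [integral_add (((hpow 4).fun_add ((hpow 2).const_mul 6)).fun_add (integrable_const 1))
        hodd_int,
      integral_add ((hpow 4).fun_add ((hpow 2).const_mul 6)) (integrable_const 1),
      integral_add (hpow 4) ((hpow 2).const_mul 6), integral_const_mul, ih,
      hε.integral_sum_sq, hodd, card_insert_of_notMem hi]
    simp only [integral_const, probReal_univ, smul_eq_mul, mul_one, add_zero, Nat.cast_add,
      Nat.cast_one]
    ring

lemma integral_abs_sum_le_sqrt_card (hε : IsRademacher ε P) (T : Finset ι) :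
    ∫ ω, |∑ i ∈ T, ε i ω| ∂P ≤ √(#T : ℝ) := by
  simpa [hε.integral_sum_sq] using integral_abs_le_sqrt_integral_sq (hε.memLp_sum T 2)

lemma sqrt_card_div_two_le_integral_abs_sum (hε : IsRademacher ε P) (T : Finset ι) :
    √(#T : ℝ) / 2 ≤ ∫ ω, |∑ i ∈ T, ε i ω| ∂P := by
  have hsq : √(#T : ℝ) ^ 2 = #T := Real.sq_sqrt (Nat.cast_nonneg _)
  refine half_le_integral_abs_of_integral_pow_four_le (hε.memLp_sum T 4) (Real.sqrt_nonneg _)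
    (by rw [hε.integral_sum_sq, hsq]) ?_
  rw [hε.integral_sum_pow_four, show √(#T : ℝ) ^ 4 = (√(#T : ℝ) ^ 2) ^ 2 by ring, hsq]
  linarith [(Nat.cast_nonneg #T : (0 : ℝ) ≤ #T)]

lemma integrable_iSup_sum_mul [Fintype ι] {A : Type*} [Nonempty A] (hε : IsRademacher ε P)
    {c : A → ι → ℝ} (hc : ∀ a i, |c a i| ≤ 1) :
    Integrable (fun ω => ⨆ a, ∑ i, ε i ω * c a i) P := by
  have hbound : ∀ ω a, |∑ i, ε i ω * c a i| ≤ Fintype.card ι := fun ω a => by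
    simpa using hε.abs_sum_mul_le_card univ (hc a) ω
  refine .of_bound (hε.measurable_comp fun v => ⨆ a, ∑ i, v i * c a i).aestronglyMeasurable
    (Fintype.card ι) (.of_forall fun ω => ?_)
  obtain ⟨a⟩ := ‹Nonempty A›
  rw [Real.norm_eq_abs, abs_le]
  exact ⟨(abs_le.mp (hbound ω a)).1.trans (le_ciSup (hε.bddAbove_range_sum_mul hc ω) a),
    ciSup_le fun a => (le_abs_self _).trans (hbound ω a)⟩

end IsRademacher

def ShattersAt {J X : Type*} (F : Set (X → ℝ)) (x : J → X) (s : J → ℝ) (α : ℝ) : Prop :=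
  ∀ sgn : J → Bool, ∃ f ∈ F, ∀ j, (if sgn j then (1 : ℝ) else -1) * (f (x j) - s j) ≥ α / 2

namespace ShattersAt

variable {J K X : Type*} [Fintype J] {F : Set (X → ℝ)} {x : J → X} {s : J → ℝ} {α : ℝ}

lemma exists_sum_mul_ge (h : ShattersAt F x s α) (a : J → ℝ) :
    ∃ f ∈ F, ∑ j, a j * s j + α / 2 * ∑ j, |a j| ≤ ∑ j, a j * f (x j) := by
  obtain ⟨f, hf, hsep⟩ := h fun j => decide (0 ≤ a j)
  refine ⟨f, hf, ?_⟩
  rw [mul_sum, ← sum_add_distrib]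
  refine sum_le_sum fun j _ => ?_
  have hj := hsep j
  by_cases ha : 0 ≤ a j
  · simp only [ha, decide_true, if_true, one_mul] at hj
    rw [abs_of_nonneg ha]; nlinarith
  · simp only [ha, decide_false, Bool.false_eq_true, if_false] at hj
    rw [abs_of_neg (not_le.mp ha)]; nlinarith

lemma integral_iSup_sum_mul_ge [Fintype K] {Ω : Type*} [MeasurableSpace Ω] {P : Measure Ω}
    [IsProbabilityMeasure P] {ε : J × K → Ω → ℝ} (hε : IsRademacher ε P)
    (hF : ∀ f ∈ F, ∀ x, |f x| ≤ 1) (hshat : ShattersAt F x s α) :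
    α / 2 * ∑ j, ∫ ω, |∑ k, ε (j, k) ω| ∂P ≤
      ∫ ω, ⨆ f : F, ∑ j, ∑ k, ε (j, k) ω * (f : X → ℝ) (x j) ∂P := by
  obtain ⟨f₀, hf₀, -⟩ := hshat fun _ => true
  have : Nonempty F := ⟨⟨f₀, hf₀⟩⟩
  have hc : ∀ (f : F) (p : J × K), |(f : X → ℝ) (x p.1)| ≤ 1 := fun f p => hF f f.2 _
  have hflat : ∀ ω (f : F), ∑ j, ∑ k, ε (j, k) ω * (f : X → ℝ) (x j) =
      ∑ p, ε p ω * (f : X → ℝ) (x p.1) := fun ω f =>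
      (Fintype.sum_prod_type' fun j k => ε (j, k) ω * (f : X → ℝ) (x j)).symm
  simp_rw [hflat]
  set S : J → Ω → ℝ := fun j ω => ∑ k, ε (j, k) ω
  have hS : ∀ j, Integrable (S j) P := fun j =>
    integrable_finsetSum _ fun k _ => hε.integrable (j, k)
  have hS_mean : ∀ j, ∫ ω, S j ω ∂P = 0 := fun j => by
    simp [S, integral_finsetSum _ fun k _ => hε.integrable (j, k), hε.integral_eq_zero]
  have hlow : ∀ ω, ∑ j, S j ω * s j + α / 2 * ∑ j, |S j ω| ≤
      ⨆ f : F, ∑ p, ε p ω * (f : X → ℝ) (x p.1) := fun ω => by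
    obtain ⟨f, hf, hle⟩ := hshat.exists_sum_mul_ge fun j => S j ω
    refine hle.trans (le_of_eq_of_le ?_ (le_ciSup (hε.bddAbove_range_sum_mul hc ω) ⟨f, hf⟩))
    simp [S, Fintype.sum_prod_type, sum_mul]
  have hlin : Integrable (fun ω => ∑ j, S j ω * s j) P :=
    integrable_finsetSum _ fun j _ => (hS j).mul_const _
  have habs : Integrable (fun ω => α / 2 * ∑ j, |S j ω|) P :=
    (integrable_finsetSum _ fun j _ => (hS j).abs).const_mul _
  have hmono := integral_mono (hlin.fun_add habs) (hε.integrable_iSup_sum_mul hc) hlow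
  rw [integral_add hlin habs, integral_finsetSum _ fun j _ => (hS j).mul_const _,
    integral_const_mul, integral_finsetSum _ fun j _ => (hS j).abs] at hmono
  simpa [integral_mul_const, hS_mean] using hmono

end ShattersAt

/-- Rademacher complexity lower bound from shattering: if `F ⊆ [−1,1]^X` is shattered at scale
`α` by points `x₁,…,x_m` with witness `s`, and `ε_{j,k}` are i.i.d. Rademacher variables, then
`E[sup_{f∈F} ∑_j ∑_k ε_{j,k} f(x_j)] ≥ (α/4)·m·E[|∑_k ε_{j,k}|] ≥ (α/8)·m·√n`. -/
theorem stmt_9 {X Ω : Type*} [MeasurableSpace Ω] (P : Measure Ω) [IsProbabilityMeasure P]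
    (F : Set (X → ℝ)) (hFbd : ∀ f ∈ F, ∀ x, |f x| ≤ 1)
    (α : ℝ) (hα : 0 < α) (m n : ℕ) (x : Fin m → X) (s : Fin m → ℝ)
    (hshat : ∀ sgn : Fin m → Bool, ∃ f ∈ F, ∀ j,
      (if sgn j then (1 : ℝ) else -1) * (f (x j) - s j) ≥ α / 2)
    (ε : Fin m × Fin n → Ω → ℝ) (hmeas : ∀ p, Measurable (ε p))
    (hind : iIndepFun ε P)
    (hval : ∀ p ω, ε p ω = 1 ∨ ε p ω = -1)
    (hfair : ∀ p, P {ω | ε p ω = 1} = 1 / 2) :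
    (∀ j : Fin m, α / 4 * m * ∫ ω, |∑ k, ε (j, k) ω| ∂P ≤
        ∫ ω, ⨆ f : F, ∑ j', ∑ k, ε (j', k) ω * (f : X → ℝ) (x j') ∂P) ∧
    α / 8 * m * Real.sqrt n ≤
      ∫ ω, ⨆ f : F, ∑ j', ∑ k, ε (j', k) ω * (f : X → ℝ) (x j') ∂P := by
  have hε : IsRademacher ε P := ⟨hmeas, hind, hval, hfair⟩
  have hrow (j : Fin m) : IsRademacher (fun k => ε (j, k)) P :=
    hε.comp_injective (Prod.mk_right_injective j)
  have hkey : α / 4 * m * √n ≤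
      ∫ ω, ⨆ f : F, ∑ j', ∑ k, ε (j', k) ω * (f : X → ℝ) (x j') ∂P :=
    calc α / 4 * m * √n = α / 2 * ∑ _j : Fin m, √n / 2 := by
          simp only [sum_const, card_univ, Fintype.card_fin, nsmul_eq_mul]; ring
      _ ≤ α / 2 * ∑ j, ∫ ω, |∑ k, ε (j, k) ω| ∂P := by
        gcongr with j
        simpa using (hrow j).sqrt_card_div_two_le_integral_abs_sum univ
      _ ≤ _ := ShattersAt.integral_iSup_sum_mul_ge hε hFbd hshat
  refine ⟨fun j => le_trans ?_ hkey, le_trans ?_ hkey⟩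
  · gcongr
    simpa using (hrow j).integral_abs_sum_le_sqrt_card univ
  · gcongr
    norm_num
end

section
/- There exists a function class F of threshold functions on [0,1] with VC dimension 1, and an adversary that is σ-smooth with respect to some unknown base measure μ (depending on the data sequence), such that for any prediction strategy of the learner, if T ≤ 1/σ then the expected number of mistakes (expected regret with respect to F under 0-1 loss) is at least T/2. -/
/-!
Thresholds are monotone, so they shatter a point but no pair. The adversary runs a binary search
on the threshold: at round `t` it queries the midpoint of the current interval and reveals a fair
coin as the label, then keeps the half of the interval consistent with that label, so every label
sequence is realized by the threshold at the end of the search. Flipping the coin of round `t`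
changes neither the history nor the query of that round, only its label, so for every learner each
round is a mistake on at least one of two equally likely outcomes.
-/

open MeasureTheory Function

noncomputable section

def threshold (θ x : ℝ) : ℝ := if θ ≤ x then 1 else -1

lemma monotone_threshold (θ : ℝ) : Monotone (threshold θ) := by
  intro x y hxy
  unfold threshold
  split_ifs with hx hy <;> norm_num
  exact hy (hx.trans hxy)

lemma not_threshold_eq_one_and_eq_neg_one {θ x y : ℝ} (hxy : x ≤ y) :
    ¬ (threshold θ x = 1 ∧ threshold θ y = -1) := by
  rintro ⟨hx, hy⟩
  have := monotone_threshold θ hxy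
  rw [hx, hy] at this
  norm_num at this

section Bisection

variable (b : ℕ → Bool)

/-- The intervals `(lo, hi]` of a binary search for a point of `(0, 1]`, where `b n` answers whether
the point is at most the `n`-th query. -/
def bisect : ℕ → ℝ × ℝ
  | 0 => (0, 1)
  | n + 1 =>
    let m := ((bisect n).1 + (bisect n).2) / 2
    if b n then ((bisect n).1, m) else (m, (bisect n).2)

def bisectQuery (n : ℕ) : ℝ := ((bisect b n).1 + (bisect b n).2) / 2

lemma bisect_succ (n : ℕ) :
    bisect b (n + 1) =
      if b n then ((bisect b n).1, bisectQuery b n) else (bisectQuery b n, (bisect b n).2) :=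
  rfl

lemma bisect_fst_lt_snd (n : ℕ) : (bisect b n).1 < (bisect b n).2 := by
  induction n with
  | zero => simp [bisect]
  | succ n ih => cases hb : b n <;> simp [bisect_succ, hb, bisectQuery] <;> linarith

lemma monotone_bisect_fst : Monotone fun n => (bisect b n).1 := by
  refine monotone_nat_of_le_succ fun n => ?_
  have := bisect_fst_lt_snd b n
  rw [bisect_succ]
  split
  · exact le_rfl
  · show _ ≤ bisectQuery b n
    unfold bisectQuery
    linarith

lemma antitone_bisect_snd : Antitone fun n => (bisect b n).2 := by
  refine antitone_nat_of_succ_le fun n => ?_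
  have := bisect_fst_lt_snd b n
  rw [bisect_succ]
  split
  · show bisectQuery b n ≤ _
    unfold bisectQuery
    linarith
  · exact le_rfl

lemma bisect_snd_mem_Icc (n : ℕ) : (bisect b n).2 ∈ Set.Icc (0 : ℝ) 1 := by
  have h0 : (bisect b 0).1 ≤ (bisect b n).1 := monotone_bisect_fst b n.zero_le
  have h1 : (bisect b n).2 ≤ (bisect b 0).2 := antitone_bisect_snd b n.zero_le
  have := bisect_fst_lt_snd b n
  simp only [bisect] at h0 h1
  constructor <;> linarith

lemma bisectQuery_congr {c : ℕ → Bool} {n : ℕ} (h : ∀ k < n, b k = c k) :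
    bisectQuery b n = bisectQuery c n := by
  suffices bisect b n = bisect c n by rw [bisectQuery, bisectQuery, this]
  induction n with
  | zero => rfl
  | succ n ih =>
    rw [bisect_succ, bisect_succ, bisectQuery, bisectQuery, ih fun k hk => h k (by omega),
      h n n.lt_succ_self]

lemma threshold_bisect_snd_bisectQuery {N t : ℕ} (ht : t < N) :
    threshold (bisect b N).2 (bisectQuery b t) = if b t then 1 else -1 := by
  have hlo := monotone_bisect_fst b ht
  have hhi := antitone_bisect_snd b ht
  have hN := bisect_fst_lt_snd b N
  cases hb : b t
  · have : bisectQuery b t < (bisect b N).2 := by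
      simp only [bisect_succ, hb, Bool.false_eq_true, if_false] at hlo
      linarith
    simp [threshold, not_le.mpr this]
  · have : (bisect b N).2 ≤ bisectQuery b t := by simpa [bisect_succ, hb] using hhi
    simp [threshold, this]

end Bisection

section Empirical

variable {α ι : Type*} [MeasurableSpace α] [Fintype ι]

def empiricalMeasure (x : ι → α) : Measure α :=
  (Fintype.card ι : ENNReal)⁻¹ • ∑ i, Measure.dirac (x i)

lemma empiricalMeasure_apply (x : ι → α) (A : Set α) :
    empiricalMeasure x A = (Fintype.card ι : ENNReal)⁻¹ * ∑ i, Measure.dirac (x i) A := by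
  rw [empiricalMeasure, Measure.smul_apply, Measure.finsetSum_apply, smul_eq_mul]

instance isProbabilityMeasure_empiricalMeasure [Nonempty ι] (x : ι → α) :
    IsProbabilityMeasure (empiricalMeasure x) := by
  constructor
  simp only [empiricalMeasure_apply, measure_univ, Finset.sum_const, Finset.card_univ,
    nsmul_eq_mul, mul_one]
  exact ENNReal.inv_mul_cancel (by simp) (ENNReal.natCast_ne_top _)

lemma dirac_le_ofReal_mul_empiricalMeasure {c : ℝ} (hc : (Fintype.card ι : ℝ) ≤ c)
    (x : ι → α) (i : ι) (A : Set α) :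
    Measure.dirac (x i) A ≤ ENNReal.ofReal c * empiricalMeasure x A := calc
  Measure.dirac (x i) A ≤ ∑ j, Measure.dirac (x j) A :=
    Finset.single_le_sum (f := fun j => Measure.dirac (x j) A) (by simp) (Finset.mem_univ i)
  _ = Fintype.card ι * empiricalMeasure x A := by
    have : Nonempty ι := ⟨i⟩
    rw [empiricalMeasure_apply, ← mul_assoc,
      ENNReal.mul_inv_cancel (by simp) (ENNReal.natCast_ne_top _), one_mul]
  _ ≤ ENNReal.ofReal c * empiricalMeasure x A := by
    gcongr
    simpa using ENNReal.ofReal_le_ofReal hc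

end Empirical

lemma one_half_le_integral_uniform_of_involutive {Ω : Type*} [Fintype Ω] [Nonempty Ω]
    [MeasurableSpace Ω] [MeasurableSingletonClass Ω] {ι : Ω → Ω} (hι : Involutive ι)
    {p : Ω → Prop} [DecidablePred p] (hp : ∀ ω, p ω ∨ p (ι ω)) :
    1 / 2 ≤ ∫ ω, (if p ω then 1 else 0 : ℝ) ∂(PMF.uniformOfFintype Ω).toMeasure := by
  set m : Ω → ℝ := fun ω => if p ω then 1 else 0
  have hm : ∀ ω, 1 ≤ m ω + m (ι ω) := fun ω => by
    rcases hp ω with h | h <;> simp only [m, h, if_true] <;> split_ifs <;> norm_num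
  have hsum : (Fintype.card Ω : ℝ) ≤ 2 * ∑ ω, m ω := calc
    (Fintype.card Ω : ℝ) = ∑ _ω : Ω, (1 : ℝ) := by simp
    _ ≤ ∑ ω, (m ω + m (ι ω)) := Finset.sum_le_sum fun ω _ => hm ω
    _ = 2 * ∑ ω, m ω := by rw [Finset.sum_add_distrib, hι.bijective.sum_comp m]; ring
  have hcard : (0 : ℝ) < Fintype.card Ω := by exact_mod_cast Fintype.card_pos
  simp only [PMF.integral_eq_sum, PMF.uniformOfFintype_apply, ENNReal.toReal_inv,
    ENNReal.toReal_natCast, smul_eq_mul, ← Finset.mul_sum]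
  rw [inv_mul_eq_div, div_le_div_iff₀ two_pos hcard]
  linarith

section RandomLabels

variable {Ω X Y : Type*} {T : ℕ}

def history (xs : Fin T → Ω → X) (ys : Fin T → Ω → Y) (t : Fin T) (ω : Ω) : Fin t → X × Y :=
  fun s => (xs ⟨s, s.isLt.trans t.isLt⟩ ω, ys ⟨s, s.isLt.trans t.isLt⟩ ω)

def flipAt (t : Fin T) (ω : Fin T → Bool) : Fin T → Bool := update ω t (!ω t)

lemma flipAt_involutive (t : Fin T) : Involutive (flipAt t) := by
  intro ω
  funext s
  by_cases hs : s = t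
  · subst hs; simp [flipAt]
  · simp [flipAt, update_of_ne hs]

lemma flipAt_of_ne {t s : Fin T} (hs : s ≠ t) (ω : Fin T → Bool) : flipAt t ω s = ω s :=
  update_of_ne hs _ _

variable {xs : Fin T → (Fin T → Bool) → X}

lemma history_flipAt (hxs : ∀ t ω ω', (∀ s < t, ω s = ω' s) → xs t ω = xs t ω')
    (label : Bool → Y) (t : Fin T) (ω : Fin T → Bool) :
    history xs (fun s ω => label (ω s)) t (flipAt t ω) = history xs (fun s ω => label (ω s)) t ω := by
  have hpast : ∀ s < t, flipAt t ω s = ω s := fun s hs => flipAt_of_ne hs.ne ω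
  funext s
  have hs : (⟨s, s.isLt.trans t.isLt⟩ : Fin T) < t := s.isLt
  simp only [history, hpast _ hs, hxs _ _ _ fun r hr => hpast r (hr.trans hs)]

theorem half_le_integral_card_mistakes [DecidableEq Y] (label : Bool → Y) (hlabel : Injective label)
    (hxs : ∀ t ω ω', (∀ s < t, ω s = ω' s) → xs t ω = xs t ω')
    (pred : (t : Fin T) → (Fin t → X × Y) → X → Y) :
    (T : ℝ) / 2 ≤ ∫ ω,
      ((Finset.univ.filter fun t : Fin T =>
        pred t (history xs (fun s ω => label (ω s)) t ω) (xs t ω) ≠ label (ω t)).card : ℝ)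
        ∂(PMF.uniformOfFintype (Fin T → Bool)).toMeasure := by
  have hmistake : ∀ t ω,
      pred t (history xs (fun s ω => label (ω s)) t ω) (xs t ω) ≠ label (ω t) ∨
      pred t (history xs (fun s ω => label (ω s)) t (flipAt t ω)) (xs t (flipAt t ω)) ≠
        label (flipAt t ω t) := by
    intro t ω
    rw [history_flipAt hxs, hxs t _ ω fun s hs => flipAt_of_ne hs.ne ω]
    have : label (flipAt t ω t) ≠ label (ω t) := hlabel.ne (by simp [flipAt])
    by_contra! h
    exact this (h.2.symm.trans h.1)
  simp only [Finset.natCast_card_filter]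
  rw [integral_finsetSum _ fun t _ => .of_finite]
  calc (T : ℝ) / 2 = ∑ _t : Fin T, (1 / 2 : ℝ) := by simp; ring
    _ ≤ _ := Finset.sum_le_sum fun t _ =>
      one_half_le_integral_uniform_of_involutive (flipAt_involutive t) (hmistake t)

end RandomLabels

def extendFalse {T : ℕ} (ω : Fin T → Bool) : ℕ → Bool := extend Fin.val ω fun _ => false

lemma extendFalse_val {T : ℕ} (ω : Fin T → Bool) (t : Fin T) : extendFalse ω t = ω t :=
  Fin.val_injective.extend_apply ω _ t

lemma bisectQuery_extendFalse_congr {T : ℕ} {t : Fin T} {ω ω' : Fin T → Bool}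
    (h : ∀ s < t, ω s = ω' s) : bisectQuery (extendFalse ω) t = bisectQuery (extendFalse ω') t := by
  refine bisectQuery_congr _ fun k hk => ?_
  have hkT : k < T := hk.trans t.isLt
  simpa only [← extendFalse_val _ ⟨k, hkT⟩] using h ⟨k, hkT⟩ hk

lemma threshold_bisect_snd_bisectQuery_extendFalse {T : ℕ} (ω : Fin T → Bool) (t : Fin T) :
    threshold (bisect (extendFalse ω) T).2 (bisectQuery (extendFalse ω) t) =
      if ω t then 1 else -1 := by
  rw [← extendFalse_val ω t]
  exact threshold_bisect_snd_bisectQuery _ t.isLt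

end

open Classical in
/-- Lower bound with unknown base measure: the class of thresholds on `[0,1]` has VC dimension 1
(some single point is shattered, no pair of points is shattered), yet for every `σ ∈ (0,1]` and
horizon `T ≤ 1/σ` there is a realizable adversary — whose context distributions are point masses
that are `σ`-smooth with respect to some (data-dependent, unknown) probability measure — forcing
every (deterministic) learner to suffer expected 0-1 regret (number of mistakes) at least `T/2`. -/
theorem stmt_13 :
    ∃ F : Set (ℝ → ℝ),
      F = {f | ∃ θ ∈ Set.Icc (0 : ℝ) 1, f = fun x => if θ ≤ x then (1 : ℝ) else -1} ∧
      (∃ x0 : ℝ, ∀ b : Bool, ∃ f ∈ F, f x0 = (if b then (1 : ℝ) else -1)) ∧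
      (¬ ∃ x1 x2 : ℝ, x1 ≠ x2 ∧ ∀ b1 b2 : Bool, ∃ f ∈ F,
        f x1 = (if b1 then (1 : ℝ) else -1) ∧ f x2 = (if b2 then (1 : ℝ) else -1)) ∧
      ∀ σ : ℝ, 0 < σ → σ ≤ 1 → ∀ T : ℕ, 0 < T → (T : ℝ) ≤ 1 / σ →
        ∃ (Ω : Type) (_ : MeasurableSpace Ω) (P : Measure Ω) (_ : IsProbabilityMeasure P)
          (xs ys : Fin T → Ω → ℝ),
          (∀ ω, ∃ f ∈ F, ∀ t, f (xs t ω) = ys t ω) ∧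
          (∀ ω, ∃ μb : Measure ℝ, IsProbabilityMeasure μb ∧
            ∀ t, ∀ A : Set ℝ, Measure.dirac (xs t ω) A ≤ ENNReal.ofReal (1 / σ) * μb A) ∧
          ∀ pred : (t : Fin T) → (Fin t → ℝ × ℝ) → ℝ → ℝ,
            (T : ℝ) / 2 ≤ ∫ ω,
              ((Finset.univ.filter fun t : Fin T =>
                pred t (fun su => (xs ⟨su, su.isLt.trans t.isLt⟩ ω,
                  ys ⟨su, su.isLt.trans t.isLt⟩ ω)) (xs t ω) ≠ ys t ω).card : ℝ) ∂P := by
  refine ⟨_, rfl, ⟨0, fun b => ?_⟩, ?_, fun σ _ _ T hT hTσ => ?_⟩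
  · cases b
    · exact ⟨threshold 1, ⟨1, by norm_num, rfl⟩, by norm_num [threshold]⟩
    · exact ⟨threshold 0, ⟨0, by norm_num, rfl⟩, by norm_num [threshold]⟩
  · rintro ⟨x1, x2, hne, h⟩
    rcases hne.lt_or_gt with hlt | hlt
    · obtain ⟨_, ⟨θ, _, rfl⟩, h1, h2⟩ := h true false
      exact not_threshold_eq_one_and_eq_neg_one (θ := θ) hlt.le ⟨h1, h2⟩
    · obtain ⟨_, ⟨θ, _, rfl⟩, h1, h2⟩ := h false true
      exact not_threshold_eq_one_and_eq_neg_one (θ := θ) hlt.le ⟨h2, h1⟩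
  let label : Bool → ℝ := fun b => if b then 1 else -1
  let xs : Fin T → (Fin T → Bool) → ℝ := fun t ω => bisectQuery (extendFalse ω) t
  refine ⟨Fin T → Bool, inferInstance, (PMF.uniformOfFintype _).toMeasure, inferInstance, xs,
    fun t ω => label (ω t), fun ω => ?_, fun ω => ?_, ?_⟩
  · exact ⟨_, ⟨_, bisect_snd_mem_Icc (extendFalse ω) T, rfl⟩,
      threshold_bisect_snd_bisectQuery_extendFalse ω⟩
  · have : Nonempty (Fin T) := ⟨⟨0, hT⟩⟩
    exact ⟨empiricalMeasure (xs · ω), inferInstance,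
      dirac_le_ofReal_mul_empiricalMeasure (by simpa using hTσ) (xs · ω)⟩
  · exact half_le_integral_card_mistakes label (Bool.injective_iff.mpr (by norm_num [label]))
      fun t ω ω' => bisectQuery_extendFalse_congr
end
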